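/- For all natural numbers i, i' and all real x with 0 ≤ x ≤ 1, Φ_{ii'}(−x) = (−1)^{i+i'} Φ_{ii'}(x); equivalently, with Φ⁻_{ii'} the restriction of Φ_{ii'} to [−1,0] and Φ⁺_{ii'} its restriction to [0,1], one has Φ⁻_{ii'}(−x) = (−1)^{i+i'} Φ⁺_{ii'}(x) for 0 ≤ x ≤ 1. -/
import Mathlib


open Real MeasureTheory

/-- The degree-`k` Legendre polynomial via the Rodrigues formula
`P_k(t) = (1/(2^k k!)) (d/dt)^k (t² - 1)^k`. -/
noncomputable def legendreP (k : ℕ) (t : ℝ) : ℝ :=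
  (1 / ((2 : ℝ) ^ k * (Nat.factorial k : ℝ))) *
    (Polynomial.derivative^[k] (((Polynomial.X : Polynomial ℝ) ^ 2 - 1) ^ k)).eval t

/-- The scaling functions `φ_k(x) = √(2k+1) P_k(2x-1)` on `[0,1]`, extended by zero. -/
noncomputable def scalingFn (k : ℕ) (x : ℝ) : ℝ :=
  if x ∈ Set.Icc (0:ℝ) 1 then Real.sqrt (2 * (k : ℝ) + 1) * legendreP k (2 * x - 1) else 0

/-- The cross-correlation functions `Φ_{ii'}(x) = ∫ φ_i(x+y) φ_{i'}(y) dy`. -/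
noncomputable def crossCorr (i i' : ℕ) (x : ℝ) : ℝ :=
  ∫ y : ℝ, scalingFn i (x + y) * scalingFn i' y

lemma iter_deriv_comp_neg (k : ℕ) (p : Polynomial ℝ) :
    Polynomial.derivative^[k] (p.comp (-Polynomial.X)) =
      (-1 : Polynomial ℝ) ^ k * (Polynomial.derivative^[k] p).comp (-Polynomial.X) := by
  induction k generalizing p with
  | zero => simp
  | succ n ih =>
    rw [Function.iterate_succ_apply, Function.iterate_succ_apply]
    rw [Polynomial.derivative_comp]
    simp only [Polynomial.derivative_neg, Polynomial.derivative_X]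
    rw [show (-1 : Polynomial ℝ) * (Polynomial.derivative p).comp (-Polynomial.X)
        = -((Polynomial.derivative p).comp (-Polynomial.X)) by ring,
      Polynomial.iterate_derivative_neg, ih]
    ring

lemma legendreP_neg (k : ℕ) (t : ℝ) : legendreP k (-t) = (-1 : ℝ) ^ k * legendreP k t := by
  unfold legendreP
  set Q : Polynomial ℝ := ((Polynomial.X : Polynomial ℝ) ^ 2 - 1) ^ k with hQ
  have hcomp : Q.comp (-Polynomial.X) = Q := by
    simp [hQ, Polynomial.sub_comp, Polynomial.pow_comp, Polynomial.X_comp, neg_pow]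
  have h := iter_deriv_comp_neg k Q
  rw [hcomp] at h
  have hone : ((-1 : Polynomial ℝ)) ^ k * (-1) ^ k = 1 := by
    rw [← pow_add]; exact Even.neg_one_pow ⟨k, rfl⟩
  have hkey : (Polynomial.derivative^[k] Q).comp (-Polynomial.X)
      = (-1 : Polynomial ℝ) ^ k * Polynomial.derivative^[k] Q := by
    conv_rhs => rw [h]
    rw [← mul_assoc, hone, one_mul]
  have heval : (Polynomial.derivative^[k] Q).eval (-t)
      = ((Polynomial.derivative^[k] Q).comp (-Polynomial.X)).eval t := by
    simp [Polynomial.eval_comp]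
  rw [heval, hkey]
  simp
  ring

lemma scalingFn_reflect (k : ℕ) (x : ℝ) :
    scalingFn k (1 - x) = (-1 : ℝ) ^ k * scalingFn k x := by
  unfold scalingFn
  by_cases h : x ∈ Set.Icc (0:ℝ) 1
  · have h' : 1 - x ∈ Set.Icc (0:ℝ) 1 := by
      constructor <;> [linarith [h.2]; linarith [h.1]]
    rw [if_pos h', if_pos h]
    have e : 2 * (1 - x) - 1 = -(2 * x - 1) := by ring
    rw [e, legendreP_neg]; ring
  · have h' : 1 - x ∉ Set.Icc (0:ℝ) 1 := by
      simp only [Set.mem_Icc, not_and_or, not_le] at h ⊢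
      rcases h with h | h
      · right; linarith
      · left; linarith
    rw [if_neg h', if_neg h]; ring

/-- Reflection symmetry: `Φ_{ii'}(-x) = (-1)^{i+i'} Φ_{ii'}(x)` for `0 ≤ x ≤ 1`. -/
theorem crossCorr_reflection (i i' : ℕ) (x : ℝ) (hx0 : 0 ≤ x) (hx1 : x ≤ 1) :
    crossCorr i i' (-x) = (-1 : ℝ) ^ (i + i') * crossCorr i i' x := by
  unfold crossCorr
  have key : ∀ y : ℝ, scalingFn i (-x + y) * scalingFn i' y
      = (-1 : ℝ) ^ (i + i') * (scalingFn i (x + (1 - y)) * scalingFn i' (1 - y)) := by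
    intro y
    have h1 : scalingFn i (-x + y) = (-1 : ℝ) ^ i * scalingFn i (x + (1 - y)) := by
      have h := scalingFn_reflect i (x + (1 - y))
      rw [show (1 - (x + (1 - y)) : ℝ) = -x + y by ring] at h
      exact h
    have h2 : scalingFn i' y = (-1 : ℝ) ^ i' * scalingFn i' (1 - y) := by
      have h := scalingFn_reflect i' (1 - y)
      rw [show (1 - (1 - y) : ℝ) = y by ring] at h
      exact h
    rw [h1, h2, pow_add]; ring
  simp_rw [key]
  rw [integral_const_mul]
  congr 1
  exact integral_sub_left_eq_self (fun y => scalingFn i (x + y) * scalingFn i' y) volume 1
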